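/- Let T₁ ⊊ T₂ ⊊ T₃ be valid cuts of S. Let N₂ and N₃ be tight mincuts for T₂ and T₃ respectively, and let N₁' and N₂' be tight mincuts for the valid cuts S \ T₁ and S \ T₂ respectively. If a vertex ω lies outside both N₃ and N₁' (ω ∉ N₃ and ω ∉ N₁'), then ω lies outside both N₂ and N₂' (ω ∉ N₂ and ω ∉ N₂'). -/
import Mathlib


open Finset

/-- Capacity of the cut defined by `A`: number of edges with one endpoint in `A`
and the other outside `A`. -/
def cap {V : Type*} [Fintype V] [DecidableEq V] (w : V → V → ℕ) (A : Finset V) : ℕ :=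
  ∑ a ∈ A, ∑ b ∈ Aᶜ, w a b

/-- A cut of `V` is a subset `A` with `∅ ≠ A ≠ V`. -/
def IsCut {V : Type*} [Fintype V] (A : Finset V) : Prop :=
  A ≠ ∅ ∧ A ≠ Finset.univ

/-- An `S`-cut is a cut that divides `S`. -/
def IsSCut {V : Type*} [Fintype V] [DecidableEq V] (S A : Finset V) : Prop :=
  IsCut A ∧ (A ∩ S).Nonempty ∧ (S \ A).Nonempty

/-- An `S`-mincut is an `S`-cut of minimum capacity among all `S`-cuts. -/
def IsSMincut {V : Type*} [Fintype V] [DecidableEq V] (w : V → V → ℕ) (S A : Finset V) : Prop :=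
  IsSCut S A ∧ ∀ B : Finset V, IsSCut S B → cap w A ≤ cap w B

/-- `T ⊆ S` is a valid cut of `S` if some `S`-mincut `A` satisfies `A ∩ S = T`. -/
def IsValidCut {V : Type*} [Fintype V] [DecidableEq V] (w : V → V → ℕ) (S T : Finset V) : Prop :=
  ∃ A : Finset V, IsSMincut w S A ∧ A ∩ S = T

/-- A tight mincut for a valid cut `T` of `S`. -/
def IsTightMincut {V : Type*} [Fintype V] [DecidableEq V] (w : V → V → ℕ)
    (S T N : Finset V) : Prop :=
  IsSMincut w S N ∧ N ∩ S = T ∧ ∀ A : Finset V, IsSMincut w S A → A ∩ S = T → N ⊆ A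

/-- A loose mincut for a valid cut `T` of `S`. -/
def IsLooseMincut {V : Type*} [Fintype V] [DecidableEq V] (w : V → V → ℕ)
    (S T F : Finset V) : Prop :=
  IsSMincut w S F ∧ F ∩ S = T ∧ ∀ A : Finset V, IsSMincut w S A → A ∩ S = T → A ⊆ F


lemma cap_eq {V : Type*} [Fintype V] [DecidableEq V] (w : V → V → ℕ) (A : Finset V) :
    cap w A = ∑ a : V, ∑ b : V, if a ∈ A ∧ b ∉ A then w a b else 0 := by
  unfold cap
  have h1 : ∀ a : V, (∑ b : V, if a ∈ A ∧ b ∉ A then w a b else 0)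
      = if a ∈ A then ∑ b ∈ Aᶜ, w a b else 0 := by
    intro a
    by_cases ha : a ∈ A
    · simp only [ha, true_and, if_true]
      rw [← Finset.sum_filter]
      congr 1
      ext b
      simp
    · simp [ha]
  rw [Finset.sum_congr rfl (fun a _ => h1 a), ← Finset.sum_filter]
  congr 1
  ext a
  simp

lemma cap_submodular {V : Type*} [Fintype V] [DecidableEq V] (w : V → V → ℕ) (A B : Finset V) :
    cap w (A ∩ B) + cap w (A ∪ B) ≤ cap w A + cap w B := by
  simp only [cap_eq]
  rw [← Finset.sum_add_distrib, ← Finset.sum_add_distrib]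
  refine Finset.sum_le_sum fun a _ => ?_
  rw [← Finset.sum_add_distrib, ← Finset.sum_add_distrib]
  refine Finset.sum_le_sum fun b _ => ?_
  by_cases h1 : a ∈ A <;> by_cases h2 : a ∈ B <;> by_cases h3 : b ∈ A <;> by_cases h4 : b ∈ B <;>
    simp [h1, h2, h3, h4, Finset.mem_inter, Finset.mem_union]

lemma tight_subset {V : Type*} [Fintype V] [DecidableEq V] (w : V → V → ℕ)
    {S T N M : Finset V} (hN : IsTightMincut w S T N) (hM : IsSMincut w S M)
    (hTM : N ∩ S ⊆ M ∩ S) : N ⊆ M := by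
  obtain ⟨hNmin, hNS, htight⟩ := hN
  have hIS : (N ∩ M) ∩ S = N ∩ S := by
    apply Finset.Subset.antisymm
    · exact fun x hx => by
        simp only [Finset.mem_inter] at hx ⊢; exact ⟨hx.1.1, hx.2⟩
    · intro x hx
      have hxM : x ∈ M ∩ S := hTM hx
      simp only [Finset.mem_inter] at hx hxM ⊢
      exact ⟨⟨hx.1, hxM.1⟩, hx.2⟩
  obtain ⟨⟨hNcut, hNSne, hSNne⟩, hNle⟩ := hNmin
  obtain ⟨⟨hMcut, hMSne, hSMne⟩, hMle⟩ := hM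
  have hIcut : IsSCut S (N ∩ M) := by
    refine ⟨⟨?_, ?_⟩, ?_, ?_⟩
    · rw [← hIS] at hNSne
      intro h
      rw [h] at hNSne
      simp at hNSne
    · obtain ⟨y, hy⟩ := hSNne
      intro h
      have : y ∈ N ∩ M := h ▸ Finset.mem_univ y
      exact (Finset.mem_sdiff.mp hy).2 (Finset.mem_inter.mp this).1
    · rw [hIS]; exact hNSne
    · obtain ⟨y, hy⟩ := hSNne
      exact ⟨y, Finset.mem_sdiff.mpr ⟨(Finset.mem_sdiff.mp hy).1,
        fun h => (Finset.mem_sdiff.mp hy).2 (Finset.mem_inter.mp h).1⟩⟩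
  have hSU : (S \ (N ∪ M)).Nonempty := by
    obtain ⟨y, hy⟩ := hSMne
    rw [Finset.mem_sdiff] at hy
    refine ⟨y, Finset.mem_sdiff.mpr ⟨hy.1, fun h => ?_⟩⟩
    rcases Finset.mem_union.mp h with h' | h'
    · exact hy.2 (Finset.mem_inter.mp (hTM (Finset.mem_inter.mpr ⟨h', hy.1⟩))).1
    · exact hy.2 h'
  have hUcut : IsSCut S (N ∪ M) := by
    refine ⟨⟨?_, ?_⟩, ?_, hSU⟩
    · intro h
      obtain ⟨x, hx⟩ := hNSne
      have : x ∈ N ∪ M := Finset.mem_union_left _ (Finset.mem_inter.mp hx).1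
      rw [h] at this; simp at this
    · intro h
      obtain ⟨y, hy⟩ := hSU
      rw [h] at hy
      simp at hy
    · obtain ⟨x, hx⟩ := hNSne
      exact ⟨x, Finset.mem_inter.mpr ⟨Finset.mem_union_left _ (Finset.mem_inter.mp hx).1,
        (Finset.mem_inter.mp hx).2⟩⟩
  have hNM : cap w N = cap w M := le_antisymm (hNle M ⟨hMcut, hMSne, hSMne⟩)
    (hMle N ⟨hNcut, hNSne, hSNne⟩)
  have hsub := cap_submodular w N M
  have hI := hNle (N ∩ M) hIcut
  have hU := hNle (N ∪ M) hUcut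
  have hIeq : cap w (N ∩ M) = cap w N := by omega
  have hImin : IsSMincut w S (N ∩ M) := ⟨hIcut, fun B hB => hIeq ▸ hNle B hB⟩
  have := htight (N ∩ M) hImin (by rw [hIS, hNS])
  exact fun x hx => (Finset.mem_inter.mp (this hx)).2

/-- Let `T₁ ⊊ T₂ ⊊ T₃` be valid cuts of `S`, with tight mincuts `N₂, N₃` for `T₂, T₃`
and tight mincuts `N₁', N₂'` for `S \ T₁, S \ T₂`. If `ω` lies outside both `N₃` and `N₁'`,
then `ω` lies outside both `N₂` and `N₂'`. -/
theorem distinguished_by_middle_cut {V : Type*} [Fintype V] [DecidableEq V]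
    (w : V → V → ℕ) (hsymm : ∀ u v : V, w u v = w v u) (hloop : ∀ v : V, w v v = 0)
    (S : Finset V) (hS : 2 ≤ S.card)
    (T₁ T₂ T₃ : Finset V)
    (hT₁ : IsValidCut w S T₁) (hT₂ : IsValidCut w S T₂) (hT₃ : IsValidCut w S T₃)
    (h₁₂ : T₁ ⊂ T₂) (h₂₃ : T₂ ⊂ T₃)
    (N₂ N₃ N₁' N₂' : Finset V)
    (hN₂ : IsTightMincut w S T₂ N₂) (hN₃ : IsTightMincut w S T₃ N₃)
    (hN₁' : IsTightMincut w S (S \ T₁) N₁') (hN₂' : IsTightMincut w S (S \ T₂) N₂')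
    (ω : V) (hω₃ : ω ∉ N₃) (hω₁' : ω ∉ N₁') :
    ω ∉ N₂ ∧ ω ∉ N₂' := by
  have h2 : N₂ ⊆ N₃ := by
    apply tight_subset w hN₂ hN₃.1
    rw [hN₂.2.1, hN₃.2.1]
    exact h₂₃.subset
  have h2' : N₂' ⊆ N₁' := by
    apply tight_subset w hN₂' hN₁'.1
    rw [hN₂'.2.1, hN₁'.2.1]
    exact Finset.sdiff_subset_sdiff le_rfl h₁₂.subset
  exact ⟨fun h => hω₃ (h2 h), fun h => hω₁' (h2' h)⟩
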